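/- arXiv:1512.04084 — 2 statements merged into one kernel-verified Lean document; each statement's English description precedes it below -/
import Mathlib

section
/- Let r be a positive integer, p ∈ (0,1), and let X = Bin(r,p) be the binomial random variable with P(X=k) = C(r,k) p^k (1−p)^{r−k} for 0 ≤ k ≤ r and P(X=k) = 0 for k > r. Then for all partitions λ and μ of the same weight n, λ dominates μ if and only if condition C(λ,μ,X) holds. -/
open Finset

noncomputable section

/-- The ℕ×ℕ Toeplitz matrix of a sequence `p`, with `(T_p)_{i,j} = p_{j-i}`
(and `0` when `j < i`, i.e. `p_n = 0` for negative `n`). -/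
def toeplitz (p : ℕ → ℝ) : Matrix ℕ ℕ ℝ :=
  fun i j => if i ≤ j then p (j - i) else 0

/-- A matrix is totally non-negative of order `k` iff every minor of size at
most `k` (rows and columns chosen strictly increasingly) is non-negative. -/
def IsTN (k : ℕ) (M : Matrix ℕ ℕ ℝ) : Prop :=
  ∀ l : ℕ, l ≤ k → ∀ r c : Fin l → ℕ, StrictMono r → StrictMono c →
    0 ≤ (M.submatrix r c).det

/-- A matrix is totally positive of order `k` iff every minor of size at
most `k` is positive. -/
def IsTP (k : ℕ) (M : Matrix ℕ ℕ ℝ) : Prop :=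
  ∀ l : ℕ, l ≤ k → ∀ r c : Fin l → ℕ, StrictMono r → StrictMono c →
    0 < (M.submatrix r c).det

/-- The matrix `S_p` with `(S_p)_{i,j} = (p^i)_j`, the coefficient of `x^j` in
`p(x)^i` where `p(x) = Σ p_n x^n` (and `p(x)^0 = 1`). -/
def sMatrix (p : ℕ → ℝ) : Matrix ℕ ℕ ℝ :=
  fun i j => PowerSeries.coeff j (PowerSeries.mk p ^ i)

/-- A partition: a non-increasing function from the positive integers to ℕ with
finite support (we set the irrelevant value at `0` to be `0`). -/
structure PartitionSeq where
  part : ℕ → ℕ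
  zero : part 0 = 0
  antitone : ∀ ⦃i j : ℕ⦄, 1 ≤ i → i ≤ j → part j ≤ part i
  finSupp : (Function.support part).Finite

/-- The weight `|λ|` of a partition. -/
def PartitionSeq.weight (lam : PartitionSeq) : ℕ := ∑ᶠ i, lam.part i

/-- `λ` dominates `μ`: equal weights and partial sums of `λ` are at least
those of `μ`. -/
def PartitionSeq.Dominates (lam mu : PartitionSeq) : Prop :=
  lam.weight = mu.weight ∧
  ∀ j : ℕ, 1 ≤ j →
    ∑ i ∈ Finset.Icc 1 j, mu.part i ≤ ∑ i ∈ Finset.Icc 1 j, lam.part i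

/-- `f(λ, p(x), t, x) = ∏_i (p(x)^{λ(i)} |_t)`, the product over rows of the
truncations to degree `t` of powers of the generating function. -/
def fPoly (lam : PartitionSeq) (p : ℕ → ℝ) (t : ℕ) : Polynomial ℝ :=
  ∏ᶠ i : ℕ, PowerSeries.trunc (t + 1) (PowerSeries.mk p ^ lam.part i)

/-- `P(E(λ,X,j,t))` for `X` with probability mass function `p`: the coefficient
of `x^j` in `∏_i ((p_X(x))^{λ(i)} |_t)`. -/
def probE (p : ℕ → ℝ) (lam : PartitionSeq) (j t : ℕ) : ℝ :=
  (fPoly lam p t).coeff j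

/-- Condition `C(λ,μ,X)`: `P(E(λ,X,j,t)) ≤ P(E(μ,X,j,t))` for all `j, t ∈ ℕ`. -/
def CondC (p : ℕ → ℝ) (lam mu : PartitionSeq) : Prop :=
  ∀ j t : ℕ, probE p lam j t ≤ probE p mu j t


/-! For `X = Bin(r, q)` the generating function of `X` is `B ^ r` with `B = (1 - q) + q x`, so the
factor of row `i` in `P(E(λ, X, ·, t))` is the truncation `T_m` of `B ^ m` to degree `t`, where
`m = r λ(i)`. Since `B T_m = T_(m+1) + q c_m x^(t+1)` with `c_m = [x^t] B ^ m`,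
`T_m T_(n+1) - T_(m+1) T_n = q x^(t+1) (c_m T_n - c_n T_m)`, and for `n ≤ m` this has non-negative
coefficients because the binomial coefficients are totally non-negative of order two. Hence moving
a box from a row to a row shorter by at least two increases every `P(E(λ, X, j, t))`, and `λ ⊵ μ`
lets one pass from `λ` to `μ` by such moves.

Conversely, if `∑_{i ≤ s} λ(i) < ∑_{i ≤ s} μ(i)`, take `t = r λ(s)`: the truncated product for `λ`
has degree `r ∑_i min(λ(i), λ(s))` and a positive top coefficient, while the one for `μ` has
strictly smaller degree, so `C(λ, μ, X)` fails at that `j`. -/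

open scoped Polynomial

theorem Nat.choose_mul_choose_le_choose_mul_choose {a b s t : ℕ} (hba : b ≤ a) (hst : s ≤ t) :
    a.choose s * b.choose t ≤ a.choose t * b.choose s := by
  rcases lt_or_ge b t with hbt | htb
  · simp [Nat.choose_eq_zero_of_lt hbt]
  refine Nat.le_of_mul_le_mul_right ?_ (Nat.choose_pos hst)
  calc a.choose s * b.choose t * t.choose s
      = a.choose s * b.choose s * (b - s).choose (t - s) := by
        rw [mul_assoc, Nat.choose_mul hst]; ring
    _ ≤ a.choose s * b.choose s * (a - s).choose (t - s) :=
        Nat.mul_le_mul_left _ (Nat.choose_le_choose _ (by omega))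
    _ = a.choose t * b.choose s * t.choose s := by
        rw [mul_right_comm (a.choose t), Nat.choose_mul hst]; ring

namespace PowerSeries

section CommRing

variable {R : Type*} [CommRing R]

def bernoulliPGF (q : R) : R⟦X⟧ := C (1 - q) + C q * X

theorem coeff_bernoulliPGF_pow (q : R) (M k : ℕ) :
    coeff k (bernoulliPGF q ^ M) = M.choose k * q ^ k * (1 - q) ^ (M - k) := by
  have hterm (m : ℕ) : (C q * X) ^ m * C (1 - q) ^ (M - m) * (M.choose m : R⟦X⟧) =
      C (M.choose m * q ^ m * (1 - q) ^ (M - m)) * X ^ m := by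
    simp only [map_mul, map_pow, map_natCast]; ring
  rw [bernoulliPGF, add_comm, add_pow, map_sum]
  simp only [hterm, coeff_C_mul_X_pow, sum_ite_eq, mem_range]
  split_ifs with hk
  · rfl
  · simp [Nat.choose_eq_zero_of_lt (by omega : M < k)]

theorem trunc_bernoulliPGF_mul (q : R) (f : R⟦X⟧) (t : ℕ) :
    trunc (t + 1) (bernoulliPGF q * f) =
      (Polynomial.C (1 - q) + Polynomial.C q * Polynomial.X) * trunc (t + 1) f -
        Polynomial.C (q * coeff t f) * Polynomial.X ^ (t + 1) := by
  ext (_ | k)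
  · simp [bernoulliPGF, coeff_trunc, add_mul, mul_assoc]
  · simp only [bernoulliPGF, coeff_trunc, add_mul, mul_assoc, map_add, coeff_C_mul,
      coeff_succ_X_mul, Polynomial.coeff_add, Polynomial.coeff_sub, Polynomial.coeff_C_mul,
      Polynomial.coeff_X_mul, Polynomial.coeff_X_pow, add_left_inj]
    rcases lt_trichotomy k t with hk | rfl | hk
    · simp [hk, hk.ne, hk.not_gt]
    · simp
    · simp [hk.ne', hk.not_gt, hk.not_ge]

end CommRing

variable {q : ℝ}

theorem coeff_bernoulliPGF_pow_nonneg (hq0 : 0 ≤ q) (hq1 : q ≤ 1) (M k : ℕ) :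
    0 ≤ coeff k (bernoulliPGF q ^ M) := by
  rw [coeff_bernoulliPGF_pow]
  have : 0 ≤ 1 - q := by linarith
  positivity

theorem coeff_trunc_bernoulliPGF_pow_nonneg (hq0 : 0 ≤ q) (hq1 : q ≤ 1) (t M k : ℕ) :
    0 ≤ (trunc (t + 1) (bernoulliPGF q ^ M)).coeff k := by
  rw [coeff_trunc]
  split_ifs
  exacts [coeff_bernoulliPGF_pow_nonneg hq0 hq1 M k, le_rfl]

theorem coeff_bernoulliPGF_pow_mul_le (hq0 : 0 ≤ q) (hq1 : q ≤ 1) {M n s t : ℕ}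
    (hnM : n ≤ M) (hst : s ≤ t) :
    coeff t (bernoulliPGF q ^ n) * coeff s (bernoulliPGF q ^ M) ≤
      coeff t (bernoulliPGF q ^ M) * coeff s (bernoulliPGF q ^ n) := by
  rcases lt_or_ge n t with hnt | htn
  · rw [coeff_bernoulliPGF_pow q n t, Nat.choose_eq_zero_of_lt hnt, Nat.cast_zero, zero_mul,
      zero_mul, zero_mul]
    exact mul_nonneg (coeff_bernoulliPGF_pow_nonneg hq0 hq1 _ _)
      (coeff_bernoulliPGF_pow_nonneg hq0 hq1 _ _)
  have hexp : M - t + (n - s) = M - s + (n - t) := by omega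
  have hchoose : (n.choose t * M.choose s : ℝ) ≤ M.choose t * n.choose s := by
    rw [mul_comm]; exact_mod_cast Nat.choose_mul_choose_le_choose_mul_choose hnM hst
  have : 0 ≤ 1 - q := by linarith
  simp only [coeff_bernoulliPGF_pow]
  calc _ = (n.choose t * M.choose s : ℝ) * (q ^ t * q ^ s * (1 - q) ^ (M - s + (n - t))) := by
        rw [pow_add]; ring
    _ ≤ (M.choose t * n.choose s : ℝ) * (q ^ t * q ^ s * (1 - q) ^ (M - s + (n - t))) := by
        gcongr
    _ = _ := by rw [← hexp, pow_add]; ring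

theorem coeff_trunc_bernoulliPGF_pow_succ_mul_le (hq0 : 0 ≤ q) (hq1 : q ≤ 1) {M n : ℕ}
    (hnM : n ≤ M) (t j : ℕ) :
    (trunc (t + 1) (bernoulliPGF q ^ (M + 1)) * trunc (t + 1) (bernoulliPGF q ^ n)).coeff j ≤
      (trunc (t + 1) (bernoulliPGF q ^ M) * trunc (t + 1) (bernoulliPGF q ^ (n + 1))).coeff j := by
  set T : ℕ → ℝ[X] := fun m => trunc (t + 1) (bernoulliPGF q ^ m)
  set c : ℕ → ℝ := fun m => coeff t (bernoulliPGF q ^ m)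
  have hT (m : ℕ) : T (m + 1) = (Polynomial.C (1 - q) + Polynomial.C q * Polynomial.X) * T m -
      Polynomial.C (q * c m) * Polynomial.X ^ (t + 1) := by
    simp only [T, c, pow_succ', trunc_bernoulliPGF_mul]
  have hdiff : T M * T (n + 1) = T (M + 1) * T n + Polynomial.C q *
      (Polynomial.X ^ (t + 1) * (Polynomial.C (c M) * T n - Polynomial.C (c n) * T M)) := by
    rw [hT, hT]; simp only [map_mul]; ring
  change (T (M + 1) * T n).coeff j ≤ (T M * T (n + 1)).coeff j
  rw [hdiff, Polynomial.coeff_add, le_add_iff_nonneg_right, Polynomial.coeff_C_mul,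
    Polynomial.coeff_X_pow_mul', Polynomial.coeff_sub, Polynomial.coeff_C_mul,
    Polynomial.coeff_C_mul]
  refine mul_nonneg hq0 ?_
  split_ifs with hj
  · simp only [T, c, coeff_trunc]
    split_ifs with hs
    · exact sub_nonneg.2 (coeff_bernoulliPGF_pow_mul_le hq0 hq1 hnM (by omega))
    · simp
  · exact le_rfl

theorem coeff_trunc_bernoulliPGF_pow_add_mul_le (hq0 : 0 ≤ q) (hq1 : q ≤ 1) {M n e : ℕ}
    (h : n + e ≤ M + 1) (t j : ℕ) :
    (trunc (t + 1) (bernoulliPGF q ^ (M + e)) * trunc (t + 1) (bernoulliPGF q ^ n)).coeff j ≤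
      (trunc (t + 1) (bernoulliPGF q ^ M) * trunc (t + 1) (bernoulliPGF q ^ (n + e))).coeff j := by
  induction e generalizing n with
  | zero => exact le_rfl
  | succ e ih =>
    calc _ ≤ (trunc (t + 1) (bernoulliPGF q ^ (M + e)) *
            trunc (t + 1) (bernoulliPGF q ^ (n + 1))).coeff j :=
          coeff_trunc_bernoulliPGF_pow_succ_mul_le hq0 hq1 (by omega) t j
      _ ≤ _ := by rw [show n + (e + 1) = n + 1 + e by omega]; exact ih (by omega)

theorem natDegree_trunc_bernoulliPGF_pow_le (t M : ℕ) :
    (trunc (t + 1) (bernoulliPGF q ^ M)).natDegree ≤ min M t := by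
  refine Polynomial.natDegree_le_iff_coeff_eq_zero.2 fun k hk => ?_
  rw [coeff_trunc]
  split_ifs with hkt
  · rw [coeff_bernoulliPGF_pow, Nat.choose_eq_zero_of_lt (by omega), Nat.cast_zero, zero_mul,
      zero_mul]
  · rfl

theorem coeff_trunc_bernoulliPGF_pow_min_pos (hq0 : 0 < q) (hq1 : q < 1) (t M : ℕ) :
    0 < (trunc (t + 1) (bernoulliPGF q ^ M)).coeff (min M t) := by
  rw [coeff_trunc, if_pos (by omega), coeff_bernoulliPGF_pow]
  have := Nat.choose_pos (min_le_left M t)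
  have : 0 < 1 - q := by linarith
  positivity

theorem coeff_prod_trunc_bernoulliPGF_pow_pos {ι : Type*} (hq0 : 0 < q) (hq1 : q < 1)
    (s : Finset ι) (e : ι → ℕ) (t : ℕ) :
    0 < (∏ i ∈ s, trunc (t + 1) (bernoulliPGF q ^ e i)).coeff (∑ i ∈ s, min (e i) t) := by
  have hpos (i : ι) := coeff_trunc_bernoulliPGF_pow_min_pos hq0 hq1 t (e i)
  have hdeg (i : ι) : (trunc (t + 1) (bernoulliPGF q ^ e i)).natDegree = min (e i) t :=
    Polynomial.natDegree_eq_of_le_of_coeff_ne_zero (natDegree_trunc_bernoulliPGF_pow_le t _)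
      (hpos i).ne'
  have hne (i : ι) : trunc (t + 1) (bernoulliPGF q ^ e i) ≠ 0 :=
    fun h => (hpos i).ne' (by simp [h])
  have htop :
      ∑ i ∈ s, min (e i) t = (∏ i ∈ s, trunc (t + 1) (bernoulliPGF q ^ e i)).natDegree := by
    simp only [Polynomial.natDegree_prod _ _ fun i _ => hne i, hdeg]
  rw [htop, ← Polynomial.leadingCoeff, Polynomial.leadingCoeff_prod]
  exact prod_pos fun i _ => by rw [Polynomial.leadingCoeff, hdeg]; exact hpos i

theorem coeff_prod_trunc_bernoulliPGF_pow_eq_zero {ι : Type*} (s : Finset ι) (e : ι → ℕ)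
    (t : ℕ) {j : ℕ} (hj : ∑ i ∈ s, min (e i) t < j) :
    (∏ i ∈ s, trunc (t + 1) (bernoulliPGF q ^ e i)).coeff j = 0 :=
  Polynomial.coeff_eq_zero_of_natDegree_lt <| (Polynomial.natDegree_prod_le _ _).trans_lt <|
    (sum_le_sum fun i _ => natDegree_trunc_bernoulliPGF_pow_le t (e i)).trans_lt hj

end PowerSeries

namespace Polynomial

variable {R : Type*} [CommSemiring R] [PartialOrder R] [IsOrderedRing R]

theorem coeff_prod_nonneg {ι : Type*} (s : Finset ι) {P : ι → R[X]}
    (h : ∀ i ∈ s, ∀ k, 0 ≤ (P i).coeff k) (k : ℕ) : 0 ≤ (∏ i ∈ s, P i).coeff k := by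
  refine prod_induction P (fun Q => ∀ k, 0 ≤ Q.coeff k) (fun Q S hQ hS k => ?_)
    (fun k => ?_) h k
  · rw [coeff_mul]
    exact sum_nonneg fun x _ => mul_nonneg (hQ _) (hS _)
  · rw [coeff_one]
    split_ifs <;> simp

theorem coeff_mul_le_coeff_mul_right {P Q S : R[X]} (hPQ : ∀ k, P.coeff k ≤ Q.coeff k)
    (hS : ∀ k, 0 ≤ S.coeff k) (j : ℕ) : (P * S).coeff j ≤ (Q * S).coeff j := by
  simp only [coeff_mul]
  exact sum_le_sum fun x _ => mul_le_mul_of_nonneg_right (hPQ _) (hS _)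

end Polynomial

def moveBox (f : ℕ → ℕ) (a b : ℕ) : ℕ → ℕ :=
  Function.update (Function.update f a (f a - 1)) b (f b + 1)

theorem moveBox_apply_of_ne {f : ℕ → ℕ} {a b i : ℕ} (ha : i ≠ a) (hb : i ≠ b) :
    moveBox f a b i = f i := by
  simp [moveBox, ha, hb]

theorem sum_moveBox_add_ite {f : ℕ → ℕ} {a b : ℕ} (hab : a ≠ b) (ha : 1 ≤ f a)
    (s : Finset ℕ) :
    ∑ i ∈ s, moveBox f a b i + (if a ∈ s then 1 else 0) =
      ∑ i ∈ s, f i + (if b ∈ s then 1 else 0) := by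
  classical
  have hpt (i : ℕ) :
      moveBox f a b i + (Pi.single a 1 : ℕ → ℕ) i = f i + (Pi.single b 1 : ℕ → ℕ) i := by
    rcases eq_or_ne i a with rfl | hia
    · rw [moveBox, Function.update_of_ne hab, Function.update_self, Pi.single_eq_same,
        Pi.single_eq_of_ne hab, add_zero]
      omega
    rcases eq_or_ne i b with rfl | hib
    · simp [moveBox, hia]
    · simp [moveBox_apply_of_ne hia hib, hia, hib]
  simpa only [sum_add_distrib, sum_pi_single'] using sum_congr rfl fun i _ => hpt i

theorem exists_moveBox_of_majorizes {S : ℕ} {f g : ℕ → ℕ} (hg : AntitoneOn g (Set.Icc 1 S))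
    (hfg : ∀ s, ∑ i ∈ Icc 1 s, g i ≤ ∑ i ∈ Icc 1 s, f i) (hlt : ∃ b ∈ Icc 1 S, f b < g b) :
    ∃ a ∈ Icc 1 S, ∃ b ∈ Icc 1 S, a < b ∧ f b + 2 ≤ f a ∧
      ∀ s, a ≤ s → s < b → ∑ i ∈ Icc 1 s, g i < ∑ i ∈ Icc 1 s, f i := by
  classical
  let b := Nat.find hlt
  obtain ⟨hbS, hfgb⟩ : b ∈ Icc 1 S ∧ f b < g b := Nat.find_spec hlt
  have hbmin : ∀ i ∈ Icc 1 S, i < b → g i ≤ f i := fun i hi hib =>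
    not_lt.1 fun h => Nat.find_min hlt hib ⟨hi, h⟩
  obtain ⟨a, hab, hgfa⟩ : ∃ a ∈ Icc 1 b, g a < f a := by
    by_contra! h
    exact (hfg b).not_gt (sum_lt_sum h ⟨b, mem_Icc.2 ⟨(mem_Icc.1 hbS).1, le_rfl⟩, hfgb⟩)
  simp only [mem_Icc] at hab hbS
  have hab' : a < b := lt_of_le_of_ne hab.2 (by rintro rfl; omega)
  refine ⟨a, mem_Icc.2 ⟨hab.1, by omega⟩, b, mem_Icc.2 hbS, hab', ?_, ?_⟩
  · have := hg ⟨hab.1, by omega⟩ ⟨by omega, hbS.2⟩ hab'.le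
    omega
  · intro s has hsb
    refine sum_lt_sum (fun i hi => ?_) ⟨a, mem_Icc.2 ⟨hab.1, has⟩, hgfa⟩
    simp only [mem_Icc] at hi
    exact hbmin i (mem_Icc.2 ⟨hi.1, by omega⟩) (by omega)

section Majorization

variable {R : Type*} [CommSemiring R] [PartialOrder R] [IsOrderedRing R] (P : ℕ → R[X])

theorem coeff_prod_le_coeff_prod_moveBox (hP0 : ∀ m k, 0 ≤ (P m).coeff k)
    (hP : ∀ c d, d < c → ∀ j, (P (c + 1) * P d).coeff j ≤ (P c * P (d + 1)).coeff j)
    {s : Finset ℕ} {f : ℕ → ℕ} {a b : ℕ} (ha : a ∈ s)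
    (hb : b ∈ s) (hgap : f b + 2 ≤ f a) (j : ℕ) :
    (∏ i ∈ s, P (f i)).coeff j ≤ (∏ i ∈ s, P (moveBox f a b i)).coeff j := by
  have hba : b ≠ a := by rintro rfl; omega
  obtain ⟨c, hc⟩ : ∃ c, f a = c + 1 := ⟨f a - 1, by omega⟩
  have hb' : b ∈ s.erase a := mem_erase.2 ⟨hba, hb⟩
  have hrest : ∏ i ∈ (s.erase a).erase b, P (moveBox f a b i) =
      ∏ i ∈ (s.erase a).erase b, P (f i) := by
    refine prod_congr rfl fun i hi => ?_
    simp only [mem_erase] at hi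
    rw [moveBox_apply_of_ne hi.2.1 hi.1]
  rw [← mul_prod_erase s _ ha, ← mul_prod_erase _ _ hb', ← mul_prod_erase s _ ha,
    ← mul_prod_erase _ _ hb', hrest, ← mul_assoc, ← mul_assoc]
  simp only [moveBox, Function.update_self, Function.update_of_ne hba.symm, hc, Nat.add_sub_cancel]
  exact Polynomial.coeff_mul_le_coeff_mul_right (hP c (f b) (by omega))
    (Polynomial.coeff_prod_nonneg _ fun i _ k => hP0 _ k) j

theorem coeff_prod_le_of_majorizes (hP0 : ∀ m k, 0 ≤ (P m).coeff k)
    (hP : ∀ c d, d < c → ∀ j, (P (c + 1) * P d).coeff j ≤ (P c * P (d + 1)).coeff j)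
    {S : ℕ} {f g : ℕ → ℕ} (hg : AntitoneOn g (Set.Icc 1 S))
    (hfg : ∀ s, ∑ i ∈ Icc 1 s, g i ≤ ∑ i ∈ Icc 1 s, f i)
    (hsum : ∑ i ∈ Icc 1 S, f i = ∑ i ∈ Icc 1 S, g i) (j : ℕ) :
    (∏ i ∈ Icc 1 S, P (f i)).coeff j ≤ (∏ i ∈ Icc 1 S, P (g i)).coeff j := by
  induction hD : ∑ s ∈ Icc 1 S, (∑ i ∈ Icc 1 s, f i - ∑ i ∈ Icc 1 s, g i)
    using Nat.strong_induction_on generalizing f with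
  | _ D ih =>
  by_cases hle : ∀ i ∈ Icc 1 S, g i ≤ f i
  · have heq := (sum_eq_sum_iff_of_le hle).1 hsum.symm
    rw [prod_congr rfl fun i hi => congrArg P (heq i hi).symm]
  push Not at hle
  obtain ⟨a, ha, b, hb, hab, hgap, hstrict⟩ := exists_moveBox_of_majorizes hg hfg hle
  have hpartial (s : ℕ) : ∑ i ∈ Icc 1 s, moveBox f a b i + (if a ≤ s then 1 else 0) =
      ∑ i ∈ Icc 1 s, f i + (if b ≤ s then 1 else 0) := by
    simpa [(mem_Icc.1 ha).1, (mem_Icc.1 hb).1] using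
      sum_moveBox_add_ite (f := f) hab.ne (by omega) (Icc 1 s)
  have hνf (s : ℕ) : ∑ i ∈ Icc 1 s, moveBox f a b i ≤ ∑ i ∈ Icc 1 s, f i := by
    have := hpartial s
    split_ifs at this <;> omega
  have hgν (s : ℕ) : ∑ i ∈ Icc 1 s, g i ≤ ∑ i ∈ Icc 1 s, moveBox f a b i := by
    have h := hpartial s
    by_cases hs : a ≤ s ∧ s < b
    · have := hstrict s hs.1 hs.2
      rw [if_pos hs.1, if_neg (not_le.2 hs.2)] at h
      omega
    · have := hfg s
      split_ifs at h <;> omega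
  refine (coeff_prod_le_coeff_prod_moveBox P hP0 hP ha hb hgap j).trans (ih _ ?_ hgν ?_ rfl)
  · rw [← hD]
    refine sum_lt_sum (fun s _ => by have := hνf s; omega) ⟨a, ha, ?_⟩
    have h := hpartial a
    have := hstrict a le_rfl hab
    rw [if_pos le_rfl, if_neg (not_le.2 hab)] at h
    omega
  · have h := hpartial S
    rw [if_pos (mem_Icc.1 ha).2, if_pos (mem_Icc.1 hb).2] at h
    omega

end Majorization

theorem sum_min_lt_sum_min {S s : ℕ} {f g : ℕ → ℕ} (hf : AntitoneOn f (Set.Icc 1 S))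
    (hsS : s ≤ S) (hsum : ∑ i ∈ Icc 1 S, f i = ∑ i ∈ Icc 1 S, g i)
    (hlt : ∑ i ∈ Icc 1 s, f i < ∑ i ∈ Icc 1 s, g i) :
    ∑ i ∈ Icc 1 S, min (g i) (f s) < ∑ i ∈ Icc 1 S, min (f i) (f s) := by
  have hsplit (h : ℕ → ℕ) : ∑ i ∈ Icc 1 S, h i = ∑ i ∈ Icc 1 s, h i + ∑ i ∈ Ioc s S, h i := by
    have hIcc (n : ℕ) : Icc 1 n = Ioc 0 n := Icc_add_one_left_eq_Ioc 0 n
    rw [hIcc, hIcc, sum_Ioc_consecutive _ s.zero_le hsS]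
  have hs : 1 ≤ s := Nat.one_le_iff_ne_zero.2 fun h => by simp [h] at hlt
  have hg_low : ∑ i ∈ Icc 1 s, min (g i) (f s) ≤ s * f s := by
    simpa using sum_le_card_nsmul (Icc 1 s) _ (f s) fun i _ => min_le_right (g i) _
  have hg_high : ∑ i ∈ Ioc s S, min (g i) (f s) ≤ ∑ i ∈ Ioc s S, g i :=
    sum_le_sum fun i _ => min_le_left _ _
  have hf_low : ∑ i ∈ Icc 1 s, min (f i) (f s) = s * f s := by
    rw [sum_congr rfl fun i hi => min_eq_right (hf ⟨(mem_Icc.1 hi).1, by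
      have := (mem_Icc.1 hi).2; omega⟩ ⟨hs, hsS⟩ (mem_Icc.1 hi).2)]
    simp
  have hf_high : ∑ i ∈ Ioc s S, min (f i) (f s) = ∑ i ∈ Ioc s S, f i :=
    sum_congr rfl fun i hi => min_eq_left (hf ⟨hs, hsS⟩ ⟨by
      have := (mem_Ioc.1 hi).1; omega, (mem_Ioc.1 hi).2⟩ (mem_Ioc.1 hi).1.le)
  rw [hsplit fun i => min (g i) (f s), hsplit fun i => min (f i) (f s)]
  have := hsplit f
  have := hsplit g
  omega

namespace PartitionSeq

theorem eventually_part_eq_zero (lam : PartitionSeq) :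
    ∀ᶠ i in Filter.atTop, lam.part i = 0 := by
  rw [← Nat.cofinite_eq_atTop]
  exact lam.finSupp.eventually_cofinite_notMem.mono fun i => Function.notMem_support.1

theorem exists_common_bound (lam mu : PartitionSeq) (s : ℕ) :
    ∃ S, s ≤ S ∧ (∀ i, S < i → lam.part i = 0) ∧ (∀ i, S < i → mu.part i = 0) := by
  obtain ⟨S, hS⟩ := Filter.eventually_atTop.1 ((Filter.eventually_ge_atTop s).and
    (lam.eventually_part_eq_zero.and mu.eventually_part_eq_zero))
  exact ⟨S, (hS S le_rfl).1, fun i hi => (hS i hi.le).2.1, fun i hi => (hS i hi.le).2.2⟩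

theorem support_subset_Icc (lam : PartitionSeq) {S : ℕ} (hS : ∀ i, S < i → lam.part i = 0) :
    Function.support lam.part ⊆ Icc 1 S := by
  intro i hi
  rw [Function.mem_support] at hi
  simp only [coe_Icc, Set.mem_Icc]
  exact ⟨Nat.one_le_iff_ne_zero.2 fun h => hi (h ▸ lam.zero), not_lt.1 fun h => hi (hS i h)⟩

theorem weight_eq_sum (lam : PartitionSeq) {S : ℕ} (hS : ∀ i, S < i → lam.part i = 0) :
    lam.weight = ∑ i ∈ Icc 1 S, lam.part i :=
  finsum_eq_sum_of_support_subset _ (lam.support_subset_Icc hS)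

theorem antitoneOn_part (lam : PartitionSeq) (S : ℕ) : AntitoneOn lam.part (Set.Icc 1 S) :=
  fun _ hi _ _ hij => lam.antitone hi.1 hij

theorem fPoly_eq_prod (lam : PartitionSeq) (p : ℕ → ℝ) (t : ℕ) {S : ℕ}
    (hS : ∀ i, S < i → lam.part i = 0) :
    fPoly lam p t = ∏ i ∈ Icc 1 S, PowerSeries.trunc (t + 1) (PowerSeries.mk p ^ lam.part i) := by
  refine finprod_eq_prod_of_mulSupport_subset _ fun i hi => lam.support_subset_Icc hS ?_
  rw [Function.mem_mulSupport] at hi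
  rw [Function.mem_support]
  rintro h
  simp [h] at hi

end PartitionSeq

def binomialPMF (r : ℕ) (q : ℝ) (k : ℕ) : ℝ :=
  if k ≤ r then r.choose k * q ^ k * (1 - q) ^ (r - k) else 0

theorem mk_binomialPMF (r : ℕ) (q : ℝ) :
    PowerSeries.mk (binomialPMF r q) = PowerSeries.bernoulliPGF q ^ r := by
  ext k
  rw [PowerSeries.coeff_mk, PowerSeries.coeff_bernoulliPGF_pow, binomialPMF]
  split_ifs with hk
  · rfl
  · simp [Nat.choose_eq_zero_of_lt (not_le.1 hk)]

theorem probE_binomialPMF (r : ℕ) (q : ℝ) {lam : PartitionSeq} {S : ℕ}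
    (hS : ∀ i, S < i → lam.part i = 0) (j t : ℕ) :
    probE (binomialPMF r q) lam j t =
      (∏ i ∈ Icc 1 S,
        PowerSeries.trunc (t + 1) (PowerSeries.bernoulliPGF q ^ (r * lam.part i))).coeff j := by
  simp only [probE, lam.fPoly_eq_prod _ t hS, mk_binomialPMF, pow_mul]

theorem PartitionSeq.Dominates.condC_binomialPMF {lam mu : PartitionSeq} (h : lam.Dominates mu)
    (r : ℕ) {q : ℝ} (hq0 : 0 ≤ q) (hq1 : q ≤ 1) : CondC (binomialPMF r q) lam mu := by
  intro j t
  obtain ⟨S, -, hlam, hmu⟩ := lam.exists_common_bound mu 0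
  rw [probE_binomialPMF r q hlam, probE_binomialPMF r q hmu]
  refine coeff_prod_le_of_majorizes _
    (fun m k => PowerSeries.coeff_trunc_bernoulliPGF_pow_nonneg hq0 hq1 t _ k)
    (fun c d hdc j => ?_) (mu.antitoneOn_part S) (fun s => ?_)
    (by rw [← lam.weight_eq_sum hlam, ← mu.weight_eq_sum hmu, h.1]) j
  · rw [mul_add_one, mul_add_one]
    refine PowerSeries.coeff_trunc_bernoulliPGF_pow_add_mul_le hq0 hq1 ?_ t j
    have := Nat.mul_le_mul_left r hdc
    rw [Nat.mul_succ] at this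
    omega
  · rcases Nat.eq_zero_or_pos s with rfl | hs
    · simp
    · exact h.2 s hs

theorem PartitionSeq.dominates_of_condC_binomialPMF {lam mu : PartitionSeq}
    (hw : lam.weight = mu.weight) {r : ℕ} (hr : 1 ≤ r) {q : ℝ} (hq0 : 0 < q) (hq1 : q < 1)
    (h : CondC (binomialPMF r q) lam mu) : lam.Dominates mu := by
  refine ⟨hw, fun s _ => ?_⟩
  by_contra! hlt
  obtain ⟨S, hsS, hlam, hmu⟩ := lam.exists_common_bound mu s
  have hmin := sum_min_lt_sum_min (lam.antitoneOn_part S) hsS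
    (by rw [← lam.weight_eq_sum hlam, ← mu.weight_eq_sum hmu, hw]) hlt
  set t := r * lam.part s
  have hdeg : ∑ i ∈ Icc 1 S, min (r * mu.part i) t < ∑ i ∈ Icc 1 S, min (r * lam.part i) t := by
    simp only [t, Nat.mul_min_mul_left, ← mul_sum]
    exact Nat.mul_lt_mul_of_pos_left hmin hr
  have hC := h (∑ i ∈ Icc 1 S, min (r * lam.part i) t) t
  rw [probE_binomialPMF r q hlam, probE_binomialPMF r q hmu,
    PowerSeries.coeff_prod_trunc_bernoulliPGF_pow_eq_zero _ _ t hdeg] at hC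
  exact (PowerSeries.coeff_prod_trunc_bernoulliPGF_pow_pos hq0 hq1 _ _ t).not_ge hC

/-- **Corollary (binomial case).** For `X = Bin(r,q)` with `0 < q < 1` and
partitions `λ, μ` of the same weight, `λ ⊵ μ` iff `C(λ,μ,X)`. -/
theorem dominance_iff_condC_binomial (r : ℕ) (hr : 1 ≤ r) (q : ℝ)
    (hq : q ∈ Set.Ioo (0 : ℝ) 1) (n : ℕ) (lam mu : PartitionSeq)
    (h1 : lam.weight = n) (h2 : mu.weight = n) :
    lam.Dominates mu ↔
      CondC (fun k => if k ≤ r then (r.choose k : ℝ) * q ^ k * (1 - q) ^ (r - k) else 0)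
        lam mu :=
  ⟨fun h => h.condC_binomialPMF r hq.1.le hq.2.le,
    PartitionSeq.dominates_of_condC_binomialPMF (h1.trans h2.symm) hr hq.1 hq.2⟩
end
end

section
/- Let p = {p_n}_{n=0}^∞ be a sequence of real numbers whose Toeplitz matrix T_p is TN_2. Then (p^A)_b (p^B)_a ≤ (p^A)_a (p^B)_b for all integers A ≥ B ≥ 0 and a ≥ b ≥ 0, where (p^i)_j is the coefficient of x^j in p(x)^i. -/
open Finset

noncomputable section

/-! By the 2×2 Cauchy–Binet formula, a product of upper-triangular Toeplitz matrices that are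
TN₂ is again TN₂; so `T_{p^n}` is TN₂ for every `n`, and in particular `p^n` has nonnegative
coefficients. Writing `p^A = p^(A-B) p^B`, the difference of the two sides of the inequality is the
sum over `k` of `(p^(A-B))ₖ` times the minor of `T_{p^B}` on rows `0, k` and columns `b, a`. -/

open PowerSeries

theorem Finset.sum_mul_sum_le_of_minors_nonneg {κ R : Type*} [LinearOrder κ] [CommRing R]
    [LinearOrder R] [IsStrictOrderedRing R] (s : Finset κ) {x₁ x₂ y₁ y₂ : κ → R}
    (hx : ∀ k l, k ≤ l → x₁ l * x₂ k ≤ x₁ k * x₂ l)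
    (hy : ∀ k l, k ≤ l → y₂ k * y₁ l ≤ y₁ k * y₂ l) :
    (∑ k ∈ s, x₁ k * y₂ k) * (∑ k ∈ s, x₂ k * y₁ k) ≤
      (∑ k ∈ s, x₁ k * y₁ k) * (∑ k ∈ s, x₂ k * y₂ k) := by
  set H : κ → κ → R := fun k l => x₁ k * y₁ k * (x₂ l * y₂ l) - x₁ k * y₂ k * (x₂ l * y₁ l)
  have hH : ∀ k l, 0 ≤ H k l + H l k := by
    intro k l
    have hprod : H k l + H l k = (x₁ k * x₂ l - x₁ l * x₂ k) * (y₁ k * y₂ l - y₂ k * y₁ l) := by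
      ring
    rw [hprod]
    rcases le_total k l with h | h
    · exact mul_nonneg (sub_nonneg.2 (hx k l h)) (sub_nonneg.2 (hy k l h))
    · exact mul_nonneg_of_nonpos_of_nonpos (by linarith [hx l k h]) (by linarith [hy l k h])
  have hsum : 0 ≤ ∑ k ∈ s, ∑ l ∈ s, H k l := by
    have := Finset.sum_nonneg fun k (_ : k ∈ s) => Finset.sum_nonneg fun l (_ : l ∈ s) => hH k l
    simp only [Finset.sum_add_distrib] at this
    rw [Finset.sum_comm (f := fun l k => H k l)] at this
    linarith
  simpa only [H, Finset.sum_sub_distrib, ← Finset.sum_mul_sum, sub_nonneg] using hsum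

lemma isTN_two_iff (M : Matrix ℕ ℕ ℝ) :
    IsTN 2 M ↔ (∀ i j, 0 ≤ M i j) ∧
      ∀ i₁ i₂ j₁ j₂, i₁ ≤ i₂ → j₁ ≤ j₂ → M i₁ j₂ * M i₂ j₁ ≤ M i₁ j₁ * M i₂ j₂ := by
  constructor
  · intro hM
    refine ⟨fun i j => ?_, fun i₁ i₂ j₁ j₂ hi hj => ?_⟩
    · have := hM 1 one_le_two ![i] ![j] (Subsingleton.strictMono _) (Subsingleton.strictMono _)
      rwa [Matrix.det_fin_one, Matrix.submatrix_apply] at this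
    rcases hi.eq_or_lt with rfl | hi
    · exact (mul_comm _ _).le
    rcases hj.eq_or_lt with rfl | hj
    · exact le_rfl
    have := hM 2 le_rfl ![i₁, i₂] ![j₁, j₂] (by simpa [Fin.strictMono_iff_lt_succ] using hi)
      (by simpa [Fin.strictMono_iff_lt_succ] using hj)
    simp only [Matrix.det_fin_two, Matrix.submatrix_apply, Matrix.cons_val_zero,
      Matrix.cons_val_one] at this
    linarith
  · rintro ⟨hpos, hminor⟩ l hl r c hr hc
    interval_cases l
    · simp
    · simpa [Matrix.det_fin_one] using hpos _ _
    · have := hminor _ _ _ _ (hr.monotone (Fin.zero_le 1)) (hc.monotone (Fin.zero_le 1))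
      simp only [Matrix.det_fin_two, Matrix.submatrix_apply]
      linarith

lemma toeplitz_coeff_eq_coeff_X_pow_mul (φ : ℝ⟦X⟧) (i j : ℕ) :
    toeplitz (coeff · φ) i j = coeff j (X ^ i * φ) := by
  rw [coeff_X_pow_mul']
  rfl

lemma toeplitz_coeff_zero_left (φ : ℝ⟦X⟧) (j : ℕ) : toeplitz (coeff · φ) 0 j = coeff j φ := by
  rw [toeplitz_coeff_eq_coeff_X_pow_mul, pow_zero, one_mul]

lemma toeplitz_coeff_one : toeplitz (coeff · (1 : ℝ⟦X⟧)) = 1 := by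
  ext i j
  rw [toeplitz_coeff_eq_coeff_X_pow_mul, mul_one, coeff_X_pow, Matrix.one_apply]
  exact if_congr eq_comm rfl rfl

lemma toeplitz_coeff_mul_apply (φ ψ : ℝ⟦X⟧) {j n : ℕ} (hj : j ≤ n) (i : ℕ) :
    toeplitz (coeff · (φ * ψ)) i j =
      ∑ k ∈ range (n + 1), toeplitz (coeff · φ) i k * toeplitz (coeff · ψ) k j := by
  have hvanish : ∀ k, j < k → toeplitz (coeff · ψ) k j = 0 := fun k hk => if_neg (by omega)
  rw [toeplitz_coeff_eq_coeff_X_pow_mul, ← mul_assoc, coeff_mul,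
    Nat.sum_antidiagonal_eq_sum_range_succ_mk]
  refine sum_subset_zero_on_sdiff (range_subset_range.2 (by omega)) ?_ fun k hk => ?_
  · intro k hk
    simp only [mem_sdiff, mem_range] at hk
    rw [hvanish k (by omega), mul_zero]
  · rw [toeplitz_coeff_eq_coeff_X_pow_mul, toeplitz, if_pos (by simpa [Nat.lt_succ_iff] using hk)]

lemma isTN_two_one : IsTN 2 (1 : Matrix ℕ ℕ ℝ) := by
  refine (isTN_two_iff _).2 ⟨fun i j => ?_, fun i₁ i₂ j₁ j₂ hi hj => ?_⟩
  · rw [Matrix.one_apply]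
    split_ifs <;> norm_num
  · simp only [Matrix.one_apply]
    split_ifs <;> grind

lemma IsTN.toeplitz_coeff_mul {φ ψ : ℝ⟦X⟧} (hφ : IsTN 2 (toeplitz (coeff · φ)))
    (hψ : IsTN 2 (toeplitz (coeff · ψ))) : IsTN 2 (toeplitz (coeff · (φ * ψ))) := by
  obtain ⟨hφ₀, hφ₂⟩ := (isTN_two_iff _).1 hφ
  obtain ⟨hψ₀, hψ₂⟩ := (isTN_two_iff _).1 hψ
  refine (isTN_two_iff _).2 ⟨fun i j => ?_, fun i₁ i₂ j₁ j₂ hi hj => ?_⟩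
  · rw [toeplitz_coeff_mul_apply φ ψ le_rfl]
    exact sum_nonneg fun k _ => mul_nonneg (hφ₀ _ _) (hψ₀ _ _)
  · rw [toeplitz_coeff_mul_apply φ ψ hj, toeplitz_coeff_mul_apply φ ψ hj,
      toeplitz_coeff_mul_apply φ ψ le_rfl, toeplitz_coeff_mul_apply φ ψ le_rfl]
    exact sum_mul_sum_le_of_minors_nonneg _ (fun k l hkl => hφ₂ _ _ _ _ hi hkl)
      (fun k l hkl => hψ₂ _ _ _ _ hkl hj)

lemma IsTN.toeplitz_coeff_pow {φ : ℝ⟦X⟧} (hφ : IsTN 2 (toeplitz (coeff · φ))) (n : ℕ) :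
    IsTN 2 (toeplitz (coeff · (φ ^ n))) := by
  induction n with
  | zero => rw [pow_zero, toeplitz_coeff_one]; exact isTN_two_one
  | succ n ih => rw [pow_succ]; exact ih.toeplitz_coeff_mul hφ

lemma coeff_mul_mul_coeff_le {φ ψ : ℝ⟦X⟧} (hφ : ∀ n, 0 ≤ coeff n φ)
    (hψ : IsTN 2 (toeplitz (coeff · ψ))) {a b : ℕ} (hab : b ≤ a) :
    coeff b (φ * ψ) * coeff a ψ ≤ coeff a (φ * ψ) * coeff b ψ := by
  have hrow : ∀ c ≤ a, coeff c (φ * ψ) =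
      ∑ k ∈ range (a + 1), coeff k φ * toeplitz (coeff · ψ) k c := fun c hc => by
    rw [← toeplitz_coeff_zero_left, toeplitz_coeff_mul_apply φ ψ hc]
    simp only [toeplitz_coeff_zero_left]
  rw [hrow b hab, hrow a le_rfl, sum_mul, sum_mul]
  refine sum_le_sum fun k _ => ?_
  have hminor := ((isTN_two_iff _).1 hψ).2 0 k b a (Nat.zero_le k) hab
  rw [toeplitz_coeff_zero_left, toeplitz_coeff_zero_left] at hminor
  rw [mul_assoc, mul_assoc]
  exact mul_le_mul_of_nonneg_left (by linarith) (hφ k)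

/-- **Key inequality.** If `T_p ∈ TN₂` then
`(p^A)_b (p^B)_a ≤ (p^A)_a (p^B)_b` for all `A ≥ B ≥ 0` and `a ≥ b ≥ 0`. -/
theorem power_coeff_ineq (p : ℕ → ℝ) (hTN : IsTN 2 (toeplitz p))
    (A B a b : ℕ) (hAB : B ≤ A) (hab : b ≤ a) :
    PowerSeries.coeff b (PowerSeries.mk p ^ A) *
        PowerSeries.coeff a (PowerSeries.mk p ^ B) ≤
      PowerSeries.coeff a (PowerSeries.mk p ^ A) *
        PowerSeries.coeff b (PowerSeries.mk p ^ B) := by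
  have hp : IsTN 2 (toeplitz (coeff · (mk p))) := by simpa only [coeff_mk] using hTN
  have hnonneg : ∀ n, 0 ≤ coeff n (mk p ^ (A - B)) := fun n => by
    simpa only [toeplitz_coeff_zero_left] using
      ((isTN_two_iff _).1 (hp.toeplitz_coeff_pow (A - B))).1 0 n
  rw [← Nat.sub_add_cancel hAB, pow_add]
  exact coeff_mul_mul_coeff_le hnonneg (hp.toeplitz_coeff_pow B) hab
end
end
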